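/- arXiv:2601.14839 — 6 statements merged into one kernel-verified Lean document; each statement's English description precedes it below -/
import Mathlib

section
/- Let x ∈ ℝ^m, y ∈ ℝ^n with x ↔ y (i.e., there exist p, q with x ⊗ 1_p = y ⊗ 1_q). Let s = gcd(m,n). Then there exists a unique z ∈ ℝ^s such that x = z ⊗ 1_{m/s} and y = z ⊗ 1_{n/s}. -/
open scoped BigOperators

/-- `rep t x` is `x ⊗ 1_{t/m}`: each entry of `x ∈ ℝ^m` repeated `t/m` consecutive times. -/
noncomputable def rep (t : ℕ) {m : ℕ} (x : Fin m → ℝ) : Fin t → ℝ :=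
  fun i => if h : i.1 / (t / m) < m then x ⟨i.1 / (t / m), h⟩ else 0

/-- Cross-dimensional norm `‖x‖_V = sqrt((1/n) Σ xᵢ²)`. -/
noncomputable def vnorm {n : ℕ} (x : Fin n → ℝ) : ℝ :=
  Real.sqrt ((1 / (n : ℝ)) * ∑ i, x i ^ 2)

/-- Cross-dimensional inner product `⟨x,y⟩_V`. -/
noncomputable def vinner {m n : ℕ} (x : Fin m → ℝ) (y : Fin n → ℝ) : ℝ :=
  (1 / (Nat.lcm m n : ℝ)) * ∑ i, rep (Nat.lcm m n) x i * rep (Nat.lcm m n) y i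

/-- Cross-dimensional distance `d_V(x,y) = ‖x ⊖ y‖_V`. -/
noncomputable def dV {m n : ℕ} (x : Fin m → ℝ) (y : Fin n → ℝ) : ℝ :=
  vnorm (rep (Nat.lcm m n) x - rep (Nat.lcm m n) y)

/-- `onesRepMat m t` is `I_m ⊗ 1ᵀ_{t/m}` (an `m × t` matrix, for `m ∣ t`). -/
noncomputable def onesRepMat (m t : ℕ) : Matrix (Fin m) (Fin t) ℝ :=
  Matrix.of fun i j => if j.1 / (t / m) = i.1 then (1 : ℝ) else 0

/-- `PiMat n m` is the cross-dimensional projection matrix `Π^n_m : ℝ^n → ℝ^m`,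
`Π^n_m = (m/t)(I_m ⊗ 1ᵀ_{t/m})(I_n ⊗ 1_{t/n})`, `t = lcm(m,n)`. -/
noncomputable def PiMat (n m : ℕ) : Matrix (Fin m) (Fin n) ℝ :=
  ((m : ℝ) / (Nat.lcm m n : ℝ)) •
    (onesRepMat m (Nat.lcm m n) * (onesRepMat n (Nat.lcm m n)).transpose)

/-- `A ⊗ 1ᵀ_{t/n}` for `A ∈ M_{m×n}` (an `m × t` matrix). -/
noncomputable def repCols {m n : ℕ} (t : ℕ) (A : Matrix (Fin m) (Fin n) ℝ) :
    Matrix (Fin m) (Fin t) ℝ :=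
  Matrix.of fun i j => if h : j.1 / (t / n) < n then A i ⟨j.1 / (t / n), h⟩ else 0

/-- `B ⊗ 1_{t/p}` for `B ∈ M_{p×q}` (a `t × q` matrix). -/
noncomputable def repRows {p q : ℕ} (t : ℕ) (B : Matrix (Fin p) (Fin q) ℝ) :
    Matrix (Fin t) (Fin q) ℝ :=
  Matrix.of fun j l => if h : j.1 / (t / p) < p then B ⟨j.1 / (t / p), h⟩ l else 0

/-- Weighted dimension-keeping semi-tensor product
`A ⋉̄ B = (n/t)(A ⊗ 1ᵀ_{t/n})(B ⊗ 1_{t/p})`, `t = lcm(n,p)`. -/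
noncomputable def dkstp {m n p q : ℕ} (A : Matrix (Fin m) (Fin n) ℝ)
    (B : Matrix (Fin p) (Fin q) ℝ) : Matrix (Fin m) (Fin q) ℝ :=
  ((n : ℝ) / (Nat.lcm n p : ℝ)) • (repCols (Nat.lcm n p) A * repRows (Nat.lcm n p) B)

/-- Bridge matrix `Ψ_{n×p} = (n/t)(I_n ⊗ 1ᵀ_{t/n})(I_p ⊗ 1_{t/p})`, `t = lcm(n,p)`. -/
noncomputable def Psi (n p : ℕ) : Matrix (Fin n) (Fin p) ℝ :=
  ((n : ℝ) / (Nat.lcm n p : ℝ)) •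
    (onesRepMat n (Nat.lcm n p) * (onesRepMat p (Nat.lcm n p)).transpose)

/-! `x ↔ y` says that `f k := x (k / p) = y (k / q)` is one sequence of length `m p = n q`, constant on
the blocks of length `p` and on those of length `q`. A position where `f` may change value starts a
block of both kinds, hence is a multiple of `lcm p q = p (m / s) = q (n / s)`; so `f` is constant on
blocks of that length, and reading off one value per block gives `z ∈ ℝ^s`. -/

def zeroExtend {m : ℕ} (x : Fin m → ℝ) (k : ℕ) : ℝ :=
  if h : k < m then x ⟨k, h⟩ else 0

theorem rep_apply (t : ℕ) {m : ℕ} (x : Fin m → ℝ) (i : Fin t) :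
    rep t x i = zeroExtend x (i / (t / m)) :=
  rfl

theorem zeroExtend_of_le {m k : ℕ} (x : Fin m → ℝ) (hk : m ≤ k) : zeroExtend x k = 0 :=
  dif_neg hk.not_gt

theorem zeroExtend_mul_div_cancel_left {m p : ℕ} (x : Fin m → ℝ) (hp : 0 < p) (j : Fin m) :
    zeroExtend x (p * j / p) = x j := by
  rw [Nat.mul_div_cancel_left _ hp, zeroExtend, dif_pos j.2]

theorem zeroExtend_div_eq_of_rep_eq {m n p q : ℕ} {x : Fin m → ℝ} {y : Fin n → ℝ} (hp : 0 < p)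
    (hq : 0 < q) (h : m * p = n * q) (hxy : rep (m * p) x = rep (n * q) y ∘ Fin.cast h) (k : ℕ) :
    zeroExtend x (k / p) = zeroExtend y (k / q) := by
  by_cases hk : k < m * p
  · have hm : 0 < m := Nat.pos_of_ne_zero (by rintro rfl; simp at hk)
    have hn : 0 < n := Nat.pos_of_ne_zero (by rintro rfl; simp [h] at hk)
    simpa [rep_apply, Nat.mul_div_cancel_left _ hm, Nat.mul_div_cancel_left _ hn]
      using congrFun hxy ⟨k, hk⟩
  · rw [zeroExtend_of_le, zeroExtend_of_le]
    · exact (Nat.le_div_iff_mul_le hq).2 (h ▸ not_lt.1 hk)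
    · exact (Nat.le_div_iff_mul_le hp).2 (not_lt.1 hk)

theorem Nat.mul_div_div_of_dvd {a l : ℕ} (h : a ∣ l) (k : ℕ) : a * (k / a) / l = k / l := by
  obtain ⟨c, rfl⟩ := h
  rcases a.eq_zero_or_pos with rfl | ha
  · simp
  · rw [Nat.mul_div_mul_left _ _ ha, Nat.div_div_eq_div_mul]

theorem Nat.lcm_eq_mul_div_gcd_of_mul_eq_mul {m n p q : ℕ} (h : m * p = n * q) (hm : 0 < m)
    (hp : 0 < p) : Nat.lcm p q = p * (m / Nat.gcd m n) := by
  have hkey : Nat.lcm p q * Nat.gcd m n = m * p := by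
    apply Nat.eq_of_mul_eq_mul_right hp
    calc Nat.lcm p q * Nat.gcd m n * p = Nat.lcm p q * Nat.gcd (n * q) (n * p) := by
          rw [mul_assoc, ← Nat.gcd_mul_right, h]
      _ = n * (Nat.gcd p q * Nat.lcm p q) := by rw [Nat.gcd_mul_left, Nat.gcd_comm q]; ring
      _ = m * p * p := by rw [Nat.gcd_mul_lcm, mul_right_comm, h]; ring
  rw [mul_comm p, Nat.div_mul_right_comm (Nat.gcd_dvd_left m n), ← hkey,
    Nat.mul_div_cancel _ (Nat.gcd_pos_of_pos_left n hm)]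

def IsBlockConst {α : Type*} (a : ℕ) (f : ℕ → α) : Prop :=
  ∀ k, f k = f (a * (k / a))

theorem isBlockConst_comp_div {α : Type*} (g : ℕ → α) (a : ℕ) :
    IsBlockConst a (fun k => g (k / a)) := by
  intro k
  rcases a.eq_zero_or_pos with rfl | ha
  · simp
  · simp only [Nat.mul_div_cancel_left _ ha]

theorem IsBlockConst.lcm {α : Type*} {a b : ℕ} {f : ℕ → α} (ha : IsBlockConst a f)
    (hb : IsBlockConst b f) : IsBlockConst (Nat.lcm a b) f := by
  intro k
  induction k using Nat.strong_induction_on with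
  | _ k ih =>
    -- the start of the `d`-block of `k` lies before `k`, in the same `lcm a b`-block
    have descend : ∀ d, d ∣ Nat.lcm a b → ¬ d ∣ k → IsBlockConst d f →
        f k = f (Nat.lcm a b * (k / Nat.lcm a b)) := by
      intro d hdl hdk hd
      have hlt : d * (k / d) < k :=
        (Nat.mul_div_le k d).lt_of_ne fun h => hdk ⟨_, h.symm⟩
      rw [hd k, ih _ hlt, Nat.mul_div_div_of_dvd hdl]
    by_cases hka : a ∣ k
    · by_cases hkb : b ∣ k
      · rw [Nat.mul_div_cancel' (Nat.lcm_dvd hka hkb)]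
      · exact descend b (Nat.dvd_lcm_right a b) hkb hb
    · exact descend a (Nat.dvd_lcm_left a b) hka ha

theorem Nat.div_pos_of_dvd {s t : ℕ} (hst : s ∣ t) (ht : 0 < t) : 0 < t / s :=
  Nat.div_pos (Nat.le_of_dvd ht hst) (Nat.pos_of_dvd_of_pos hst ht)

theorem eq_rep_of_isBlockConst {s t p : ℕ} {f : ℕ → ℝ} {x : Fin t → ℝ} (hst : s ∣ t)
    (hp : 0 < p) (hf : IsBlockConst (p * (t / s)) f) (hx : ∀ j : Fin t, x j = f (p * j)) :
    x = rep t (fun c : Fin s => f (p * (t / s) * c)) := by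
  funext j
  have hj : j / (t / s) < s := (Nat.div_lt_iff_lt_mul (Nat.div_pos_of_dvd hst j.pos)).2
    (by rw [Nat.mul_div_cancel' hst]; exact j.2)
  rw [hx, hf, Nat.mul_div_mul_left _ _ hp, rep_apply, zeroExtend, dif_pos hj]

theorem rep_injective {s t : ℕ} (hst : s ∣ t) (ht : 0 < t) :
    Function.Injective (rep t : (Fin s → ℝ) → Fin t → ℝ) := by
  intro z z' h
  funext c
  have hts := Nat.div_pos_of_dvd hst ht
  have hc : t / s * c < t := by
    calc t / s * c < t / s * s := Nat.mul_lt_mul_of_pos_left c.2 hts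
      _ = t := Nat.div_mul_cancel hst
  simpa [rep_apply, Nat.mul_div_cancel_left _ hts, zeroExtend] using congrFun h ⟨_, hc⟩

/-- If `x ↔ y` then there is a unique `z ∈ ℝ^{gcd(m,n)}` with
`x = z ⊗ 1_{m/s}` and `y = z ⊗ 1_{n/s}`. -/
theorem stmt5 (m n : ℕ) (hm : 0 < m) (hn : 0 < n) (x : Fin m → ℝ) (y : Fin n → ℝ)
    (hxy : ∃ p q : ℕ, 0 < p ∧ 0 < q ∧ ∃ h : m * p = n * q,
      rep (m * p) x = rep (n * q) y ∘ Fin.cast h) :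
    ∃! z : Fin (Nat.gcd m n) → ℝ, x = rep m z ∧ y = rep n z := by
  obtain ⟨p, q, hp, hq, hL, hrep⟩ := hxy
  obtain ⟨f, hfx, hfy⟩ : ∃ f : ℕ → ℝ,
      f = (fun k => zeroExtend x (k / p)) ∧ f = fun k => zeroExtend y (k / q) :=
    ⟨_, rfl, funext (zeroExtend_div_eq_of_rep_eq hp hq hL hrep)⟩
  have hf : IsBlockConst (Nat.lcm p q) f :=
    (hfx ▸ isBlockConst_comp_div _ p).lcm (hfy ▸ isBlockConst_comp_div _ q)
  have hlx : Nat.lcm p q = p * (m / Nat.gcd m n) := Nat.lcm_eq_mul_div_gcd_of_mul_eq_mul hL hm hp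
  have hly : Nat.lcm p q = q * (n / Nat.gcd m n) := by
    rw [Nat.lcm_comm, Nat.gcd_comm]
    exact Nat.lcm_eq_mul_div_gcd_of_mul_eq_mul hL.symm hn hq
  have hx : x = rep m fun c : Fin (Nat.gcd m n) => f (Nat.lcm p q * c) := by
    rw [hlx] at hf ⊢
    exact eq_rep_of_isBlockConst (Nat.gcd_dvd_left m n) hp hf fun j => by
      simp only [hfx, zeroExtend_mul_div_cancel_left x hp j]
  have hy : y = rep n fun c : Fin (Nat.gcd m n) => f (Nat.lcm p q * c) := by
    rw [hly] at hf ⊢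
    exact eq_rep_of_isBlockConst (Nat.gcd_dvd_right m n) hq hf fun i => by
      simp only [hfy, zeroExtend_mul_div_cancel_left y hq i]
  exact ⟨_, ⟨hx, hy⟩, fun z hz => rep_injective (Nat.gcd_dvd_left m n) hm (hz.1.symm.trans hx)⟩
end

section
/- Let ξ ∈ ℝ^n, m a positive integer, t = lcm(m,n), and define Π^n_m := (m/t)·(I_m ⊗ 1^T_{t/m})·(I_n ⊗ 1_{t/n}) ∈ M_{m×n}. Then x₀ := Π^n_m ξ is the unique minimizer over x ∈ ℝ^m of ‖ξ − x‖_V, i.e., x₀ = argmin_{x ∈ ℝ^m} ‖ξ − x‖_V. -/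
open scoped BigOperators

/-! Write `t = lcm(n, m) = m·d`. The vector `x ⊗ 1_d` is constant on the `m` consecutive blocks
of length `d`, so `‖ξ ⊗ 1_{t/n} − x ⊗ 1_d‖²` splits into `m` independent one-variable least-squares
problems, each solved uniquely by the mean of the corresponding block of `ξ ⊗ 1_{t/n}`; these
block means are exactly the entries of `Π^n_m ξ`. Blockwise, the variance decomposition gives the
Pythagorean identity `d_V(ξ, x)² = d_V(ξ, Π^n_m ξ)² + ‖Π^n_m ξ − x‖_V²`. -/

open Finset Matrix

lemma rep_mul_apply {m d : ℕ} (x : Fin m → ℝ) (j : Fin (m * d)) :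
    rep (m * d) x j = x j.divNat := by
  have hm : 0 < m := Nat.pos_of_mul_pos_right (Fin.pos j)
  have hj : j.1 / d < m := by simpa using j.divNat.2
  simp only [rep, Nat.mul_div_cancel_left d hm, dif_pos hj]
  rfl

lemma divNat_finProdFinEquiv {m d : ℕ} (p : Fin m × Fin d) :
    (finProdFinEquiv p).divNat = p.1 :=
  congrArg Prod.fst ((finProdFinEquiv_symm_apply _).symm.trans (finProdFinEquiv.symm_apply_apply p))

lemma sum_fin_mul {m d : ℕ} (f : Fin (m * d) → ℝ) :
    ∑ j, f j = ∑ a, ∑ b, f (finProdFinEquiv (a, b)) := by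
  rw [← finProdFinEquiv.sum_comp, Fintype.sum_prod_type]

lemma onesRepMat_transpose_mulVec (n t : ℕ) (ξ : Fin n → ℝ) :
    (onesRepMat n t)ᵀ *ᵥ ξ = rep t ξ := by
  funext j
  simp only [mulVec, dotProduct, transpose_apply, onesRepMat, of_apply, ite_mul, one_mul,
    zero_mul, rep]
  split_ifs with h
  · rw [sum_eq_single ⟨_, h⟩] <;> simp +contextual [Fin.ext_iff, eq_comm]
  · exact sum_eq_zero fun l _ => if_neg fun hl : j.1 / (t / n) = l => h (hl ▸ l.2)

lemma onesRepMat_mul_mulVec_apply {m d : ℕ} (y : Fin (m * d) → ℝ) (a : Fin m) :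
    (onesRepMat m (m * d) *ᵥ y) a = ∑ b, y (finProdFinEquiv (a, b)) := by
  simp only [mulVec, dotProduct, onesRepMat, of_apply, ite_mul, one_mul, zero_mul,
    Nat.mul_div_cancel_left d (Fin.pos a), sum_fin_mul, ← Fin.coe_divNat,
    divNat_finProdFinEquiv, Fin.val_inj]
  simp

noncomputable def blockMean (m : ℕ) {t : ℕ} (y : Fin t → ℝ) : Fin m → ℝ :=
  ((m : ℝ) / t) • (onesRepMat m t *ᵥ y)

lemma PiMat_mulVec (n m : ℕ) (ξ : Fin n → ℝ) :
    PiMat n m *ᵥ ξ = blockMean m (rep (Nat.lcm n m) ξ) := by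
  rw [PiMat, blockMean, Nat.lcm_comm, smul_mulVec, ← mulVec_mulVec, onesRepMat_transpose_mulVec]

lemma sum_block_eq_mul_blockMean {m d : ℕ} (y : Fin (m * d) → ℝ) (a : Fin m) :
    ∑ b, y (finProdFinEquiv (a, b)) = d * blockMean m y a := by
  rw [blockMean, Pi.smul_apply, onesRepMat_mul_mulVec_apply, smul_eq_mul, ← mul_assoc]
  rcases d.eq_zero_or_pos with rfl | hd
  · simp
  · have : (m : ℝ) ≠ 0 := by have := Fin.pos a; positivity
    field_simp
    push_cast
    ring

lemma sum_sq_sub_eq_sum_sq_sub_mean_add {ι : Type*} [Fintype ι] (u : ι → ℝ) (μ c : ℝ)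
    (hμ : ∑ i, u i = Fintype.card ι * μ) :
    ∑ i, (u i - c) ^ 2 = ∑ i, (u i - μ) ^ 2 + Fintype.card ι * (μ - c) ^ 2 := by
  have h : ∀ i, (u i - c) ^ 2 =
      (u i - μ) ^ 2 + 2 * (μ - c) * u i - (2 * μ * (μ - c) - (μ - c) ^ 2) := fun i => by ring
  simp only [h, sum_sub_distrib, sum_add_distrib, ← mul_sum, hμ, sum_const, card_univ,
    nsmul_eq_mul]
  ring

lemma sum_sq_sub_rep_mul {m d : ℕ} (y : Fin (m * d) → ℝ) (x : Fin m → ℝ) :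
    ∑ j, (y j - rep (m * d) x j) ^ 2 =
      ∑ j, (y j - rep (m * d) (blockMean m y) j) ^ 2 + d * ∑ a, (blockMean m y a - x a) ^ 2 := by
  have hblocks : ∀ z : Fin m → ℝ,
      ∑ j, (y j - rep (m * d) z j) ^ 2 = ∑ a, ∑ b, (y (finProdFinEquiv (a, b)) - z a) ^ 2 := by
    intro z
    simp only [sum_fin_mul, rep_mul_apply, divNat_finProdFinEquiv]
  rw [hblocks, hblocks, mul_sum, ← sum_add_distrib]
  refine sum_congr rfl fun a _ => ?_
  simpa using sum_sq_sub_eq_sum_sq_sub_mean_add (fun b => y (finProdFinEquiv (a, b))) _ (x a)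
    (by simpa using sum_block_eq_mul_blockMean y a)

lemma vnorm_sq {n : ℕ} (v : Fin n → ℝ) : vnorm v ^ 2 = 1 / n * ∑ i, v i ^ 2 :=
  Real.sq_sqrt (by positivity)

lemma vnorm_eq_zero_iff {n : ℕ} (v : Fin n → ℝ) : vnorm v = 0 ↔ v = 0 := by
  refine ⟨fun h => funext fun i => ?_, fun h => by simp [h, vnorm]⟩
  have hn : (n : ℝ) ≠ 0 := by exact_mod_cast (Fin.pos i).ne'
  have hsum : ∑ i, v i ^ 2 = 0 := by
    simpa [h, hn] using (vnorm_sq v).symm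
  exact pow_eq_zero_iff two_ne_zero |>.1 <|
    (sum_eq_zero_iff_of_nonneg fun i _ => sq_nonneg (v i)).1 hsum i (mem_univ i)

lemma dV_sq_eq_dV_sq_add_vnorm_sq {n m : ℕ} (hn : 0 < n) (hm : 0 < m) (ξ : Fin n → ℝ)
    (x : Fin m → ℝ) :
    dV ξ x ^ 2 = dV ξ (PiMat n m *ᵥ ξ) ^ 2 + vnorm (PiMat n m *ᵥ ξ - x) ^ 2 := by
  obtain ⟨d, hd⟩ := Nat.dvd_lcm_right n m
  have hd0 : 0 < d := Nat.pos_of_mul_pos_left (hd ▸ Nat.lcm_pos hn hm)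
  simp only [dV, vnorm_sq, PiMat_mulVec, Pi.sub_apply]
  generalize Nat.lcm n m = t at *
  subst hd
  rw [sum_sq_sub_rep_mul _ x]
  have : (m : ℝ) ≠ 0 := by positivity
  have : (d : ℝ) ≠ 0 := by positivity
  field_simp
  push_cast
  ring

/-- `Π^n_m ξ` is the unique minimizer of `‖ξ − x‖_V` over `x ∈ ℝ^m`. -/
theorem stmt7 (n m : ℕ) (hn : 0 < n) (hm : 0 < m) (ξ : Fin n → ℝ) :
    (∀ x : Fin m → ℝ, dV ξ ((PiMat n m).mulVec ξ) ≤ dV ξ x) ∧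
      (∀ x : Fin m → ℝ, dV ξ x = dV ξ ((PiMat n m).mulVec ξ) →
        x = (PiMat n m).mulVec ξ) := by
  have hpyth := dV_sq_eq_dV_sq_add_vnorm_sq hn hm ξ
  have hdV_nonneg : ∀ x : Fin m → ℝ, 0 ≤ dV ξ x := fun x => Real.sqrt_nonneg _
  refine ⟨fun x => ?_, fun x hx => ?_⟩
  · refine (pow_le_pow_iff_left₀ (hdV_nonneg _) (hdV_nonneg x) two_ne_zero).1 ?_
    exact hpyth x ▸ le_add_of_nonneg_right (sq_nonneg _)
  · have h : vnorm (PiMat n m *ᵥ ξ - x) = 0 := by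
      simpa [hx] using hpyth x
    exact (sub_eq_zero.1 ((vnorm_eq_zero_iff _).1 h)).symm
end

section
/- For A ∈ M_{m×n} and B ∈ M_{p×q}, the weighted DK-STP satisfies A ⋉̄ B = A·Ψ_{n×p}·B, where Ψ_{n×p} := (n/t)(I_n ⊗ 1^T_{t/n})(I_p ⊗ 1_{t/p}) and t = lcm(n,p). -/
open scoped BigOperators

lemma div_lt_of_dvd {m t : ℕ} (hm : 0 < m) (hd : m ∣ t) {j : ℕ} (hj : j < t) :
    j / (t / m) < m := by
  have ht : 0 < t := lt_of_le_of_lt (Nat.zero_le _) hj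
  have htm : 0 < t / m := Nat.div_pos (Nat.le_of_dvd ht hd) hm
  rw [Nat.div_lt_iff_lt_mul htm, Nat.mul_div_cancel' hd]
  exact hj

lemma repCols_eq {m n t : ℕ} (hn : 0 < n) (hd : n ∣ t) (A : Matrix (Fin m) (Fin n) ℝ) :
    repCols t A = A * onesRepMat n t := by
  ext i j
  have h : j.1 / (t / n) < n := div_lt_of_dvd hn hd j.2
  simp only [repCols, onesRepMat, Matrix.mul_apply, Matrix.of_apply, dif_pos h]
  rw [Finset.sum_eq_single (⟨j.1 / (t / n), h⟩ : Fin n)]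
  · simp
  · intro b _ hb
    rw [if_neg, mul_zero]
    intro hc
    exact hb (Fin.ext hc.symm)
  · simp

lemma repRows_eq {p q t : ℕ} (hp : 0 < p) (hd : p ∣ t) (B : Matrix (Fin p) (Fin q) ℝ) :
    repRows t B = (onesRepMat p t).transpose * B := by
  ext j l
  have h : j.1 / (t / p) < p := div_lt_of_dvd hp hd j.2
  simp only [repRows, onesRepMat, Matrix.mul_apply, Matrix.transpose_apply, Matrix.of_apply,
    dif_pos h]
  rw [Finset.sum_eq_single (⟨j.1 / (t / p), h⟩ : Fin p)]
  · simp
  · intro b _ hb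
    rw [if_neg, zero_mul]
    intro hc
    exact hb (Fin.ext hc.symm)
  · simp

/-- `A ⋉̄ B = A · Ψ_{n×p} · B`. -/
theorem stmt12 (m n p q : ℕ) (hn : 0 < n) (hp : 0 < p)
    (A : Matrix (Fin m) (Fin n) ℝ) (B : Matrix (Fin p) (Fin q) ℝ) :
    dkstp A B = A * Psi n p * B := by
  unfold dkstp Psi
  rw [repCols_eq hn (Nat.dvd_lcm_left n p) A, repRows_eq hp (Nat.dvd_lcm_right n p) B,
    Matrix.mul_smul, Matrix.smul_mul]
  congr 1
  simp only [Matrix.mul_assoc]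
end

section
/- For any x ∈ ℝ^m and positive integers k and t, the projection matrices satisfy the consistency identity Π^{km}_t (x ⊗ 1_k) = Π^m_t x, where Π^n_s := (s/lcm(s,n))(I_s ⊗ 1^T_{lcm(s,n)/s})(I_n ⊗ 1_{lcm(s,n)/n}). -/
open scoped BigOperators

lemma div_div_lt {L n : ℕ} (hL : 0 < L) (hdvd : n ∣ L) {a : ℕ} (ha : a < L) :
    a / (L / n) < n := by
  have hn : 0 < n := by
    rcases Nat.eq_zero_or_pos n with h | h
    · subst h; simp at hdvd; omega
    · exact h
  have h1 : 0 < L / n := Nat.div_pos (Nat.le_of_dvd hL hdvd) hn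
  rw [Nat.div_lt_iff_lt_mul h1]
  calc a < L := ha
    _ = n * (L / n) := (Nat.mul_div_cancel' hdvd).symm

lemma rep_apply_s17 {m L : ℕ} (hL : 0 < L) (hdvd : m ∣ L) (x : Fin m → ℝ) (a : Fin L) :
    rep L x a = x ⟨a.1 / (L / m), div_div_lt hL hdvd a.2⟩ := by
  rw [rep, dif_pos]

lemma piMat_mulVec {n t : ℕ} (hn : 0 < n) (ht : 0 < t) (y : Fin n → ℝ) (i : Fin t) :
    (PiMat n t).mulVec y i =
      ((t : ℝ) / (Nat.lcm t n : ℝ)) *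
        ∑ a : Fin (Nat.lcm t n),
          (if a.1 / (Nat.lcm t n / t) = i.1 then rep (Nat.lcm t n) y a else 0) := by
  have hLpos : 0 < Nat.lcm t n := Nat.pos_of_ne_zero (Nat.lcm_ne_zero ht.ne' hn.ne')
  have hnL : n ∣ Nat.lcm t n := Nat.dvd_lcm_right t n
  simp only [Matrix.mulVec, dotProduct, PiMat, Matrix.smul_apply, Matrix.mul_apply,
    onesRepMat, Matrix.transpose_apply, Matrix.of_apply, smul_eq_mul]
  have := Finset.sum_comm (s := (Finset.univ : Finset (Fin n)))
    (t := (Finset.univ : Finset (Fin (Nat.lcm t n))))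
    (f := fun j a => ((if a.1 / (Nat.lcm t n / t) = i.1 then (1:ℝ) else 0) *
      (if a.1 / (Nat.lcm t n / n) = j.1 then (1:ℝ) else 0)) * y j)
  calc (∑ j, ((t:ℝ) / (Nat.lcm t n : ℝ) *
        ∑ a : Fin (Nat.lcm t n), (if a.1 / (Nat.lcm t n / t) = i.1 then (1:ℝ) else 0) *
          (if a.1 / (Nat.lcm t n / n) = j.1 then (1:ℝ) else 0)) * y j)
      = (t:ℝ) / (Nat.lcm t n : ℝ) * ∑ j, ∑ a : Fin (Nat.lcm t n),
          ((if a.1 / (Nat.lcm t n / t) = i.1 then (1:ℝ) else 0) *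
           (if a.1 / (Nat.lcm t n / n) = j.1 then (1:ℝ) else 0)) * y j := by
        rw [Finset.mul_sum]
        exact Finset.sum_congr rfl fun j _ => by rw [mul_assoc, Finset.sum_mul]
    _ = (t:ℝ) / (Nat.lcm t n : ℝ) * ∑ a : Fin (Nat.lcm t n), ∑ j,
          ((if a.1 / (Nat.lcm t n / t) = i.1 then (1:ℝ) else 0) *
           (if a.1 / (Nat.lcm t n / n) = j.1 then (1:ℝ) else 0)) * y j := by rw [this]
    _ = (t:ℝ) / (Nat.lcm t n : ℝ) * ∑ a : Fin (Nat.lcm t n),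
          (if a.1 / (Nat.lcm t n / t) = i.1 then rep (Nat.lcm t n) y a else 0) := by
        congr 1
        refine Finset.sum_congr rfl fun a _ => ?_
        have hb : a.1 / (Nat.lcm t n / n) < n := div_div_lt hLpos hnL a.2
        rw [Finset.sum_eq_single (⟨a.1 / (Nat.lcm t n / n), hb⟩ : Fin n)]
        · rw [rep_apply_s17 hLpos hnL, if_pos rfl, mul_one]
          split <;> simp
        · intro j _ hj
          have hne : ¬ (a.1 / (Nat.lcm t n / n) = j.1) := fun h => hj (Fin.ext h.symm)
          rw [if_neg hne, mul_zero, zero_mul]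
        · simp

lemma rep_rep {m k L : ℕ} (hm : 0 < m) (hk : 0 < k) (hL : 0 < L) (hdvd : m * k ∣ L)
    (x : Fin m → ℝ) (a : Fin L) :
    rep L (rep (m * k) x) a = rep L x a := by
  have hmk : 0 < m * k := Nat.mul_pos hm hk
  have hmL : m ∣ L := (dvd_mul_right m k).trans hdvd
  rw [rep_apply_s17 hL hdvd, rep_apply_s17 hmk (dvd_mul_right m k), rep_apply_s17 hL hmL]
  congr 1
  apply Fin.ext
  show a.1 / (L / (m * k)) / (m * k / m) = a.1 / (L / m)
  obtain ⟨c, hc⟩ := hdvd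
  have h1 : m * k / m = k := Nat.mul_div_cancel_left k hm
  have h2 : L / (m * k) = c := by rw [hc]; exact Nat.mul_div_cancel_left c hmk
  have h3 : L / m = k * c := by
    rw [hc, mul_assoc]; exact Nat.mul_div_cancel_left (k * c) hm
  rw [h1, h2, h3, Nat.div_div_eq_div_mul, mul_comm c k]

lemma div_scale {L₂ r c : ℕ} (hr : 0 < r) (hc : c ∣ L₂) (b s : ℕ) (hs : s < r) :
    (s + r * b) / (L₂ * r / c) = b / (L₂ / c) := by
  have h1 : L₂ * r / c = r * (L₂ / c) := by
    rw [mul_comm L₂ r, Nat.mul_div_assoc r hc]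
  rw [h1, ← Nat.div_div_eq_div_mul, Nat.add_mul_div_left s b hr, Nat.div_eq_of_lt hs,
    Nat.zero_add]


/-- Consistency of the cross-dimensional projection:
`Π^{km}_t (x ⊗ 1_k) = Π^m_t x`. -/
theorem stmt17 (m k t : ℕ) (hm : 0 < m) (hk : 0 < k) (ht : 0 < t) (x : Fin m → ℝ) :
    (PiMat (m * k) t).mulVec (rep (m * k) x) = (PiMat m t).mulVec x := by
  funext i
  have hmk : 0 < m * k := Nat.mul_pos hm hk
  set L₁ := Nat.lcm t (m * k) with hL₁def
  set L₂ := Nat.lcm t m with hL₂def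
  have hL1pos : 0 < L₁ := Nat.pos_of_ne_zero (Nat.lcm_ne_zero ht.ne' hmk.ne')
  have hL2pos : 0 < L₂ := Nat.pos_of_ne_zero (Nat.lcm_ne_zero ht.ne' hm.ne')
  have hdvd21 : L₂ ∣ L₁ :=
    Nat.lcm_dvd (Nat.dvd_lcm_left t (m * k))
      ((dvd_mul_right m k).trans (Nat.dvd_lcm_right t (m * k)))
  set r := L₁ / L₂ with hrdef
  have hL1eq : L₁ = L₂ * r := (Nat.mul_div_cancel' hdvd21).symm
  have hr : 0 < r := Nat.div_pos (Nat.le_of_dvd hL1pos hdvd21) hL2pos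
  have htL2 : t ∣ L₂ := Nat.dvd_lcm_left t m
  have hmL2 : m ∣ L₂ := Nat.dvd_lcm_right t m
  have hmkL1 : m * k ∣ L₁ := Nat.dvd_lcm_right t (m * k)
  have hmL1 : m ∣ L₁ := (dvd_mul_right m k).trans hmkL1
  rw [piMat_mulVec hmk ht, piMat_mulVec hm ht]
  have key : ∀ (a : Fin L₁) (b : Fin L₂) (s : Fin r), a.1 = s.1 + r * b.1 →
      (if a.1 / (L₁ / t) = i.1 then rep L₁ (rep (m * k) x) a else 0)
        = (if b.1 / (L₂ / t) = i.1 then rep L₂ x b else 0) := by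
    intro a b s hval
    have h1 : a.1 / (L₁ / t) = b.1 / (L₂ / t) := by
      rw [hval]; conv_lhs => rw [hL1eq]
      exact div_scale hr htL2 b.1 s.1 s.2
    have h2 : rep L₁ (rep (m * k) x) a = rep L₂ x b := by
      rw [rep_rep hm hk hL1pos hmkL1, rep_apply_s17 hL1pos hmL1, rep_apply_s17 hL2pos hmL2]
      congr 1
      apply Fin.ext
      show a.1 / (L₁ / m) = b.1 / (L₂ / m)
      rw [hval]; conv_lhs => rw [hL1eq]
      exact div_scale hr hmL2 b.1 s.1 s.2
    rw [h1, h2]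
  let e : Fin L₂ × Fin r ≃ Fin L₁ := finProdFinEquiv.trans (finCongr hL1eq.symm)
  have hsum : (∑ a : Fin L₁, if a.1 / (L₁ / t) = i.1 then rep L₁ (rep (m * k) x) a else 0)
      = (r : ℝ) * ∑ b : Fin L₂, (if b.1 / (L₂ / t) = i.1 then rep L₂ x b else 0) := by
    rw [← Equiv.sum_comp e
      (fun a : Fin L₁ => if a.1 / (L₁ / t) = i.1 then rep L₁ (rep (m * k) x) a else 0),
      Fintype.sum_prod_type]
    rw [Finset.mul_sum]
    refine Finset.sum_congr rfl fun b _ => ?_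
    have : ∀ s : Fin r, (if (e (b, s)).1 / (L₁ / t) = i.1
        then rep L₁ (rep (m * k) x) (e (b, s)) else 0)
          = (if b.1 / (L₂ / t) = i.1 then rep L₂ x b else 0) := by
      intro s
      refine key _ b s ?_
      simp [e, finProdFinEquiv]
    rw [Finset.sum_congr rfl fun s _ => this s, Finset.sum_const, Finset.card_univ,
      Fintype.card_fin, nsmul_eq_mul]
  rw [hsum, ← mul_assoc]
  congr 1
  have hcast : (L₁ : ℝ) = (L₂ : ℝ) * (r : ℝ) := by rw [hL1eq]; push_cast; ring
  rw [hcast]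
  field_simp
  ring
end

section
/- If x ∈ ℝ^m, y ∈ ℝ^n and x ↔ y (i.e., x ⊗ 1_p = y ⊗ 1_q for some p, q), then for every positive integer t, Π^m_t x = Π^n_t y; i.e., the cross-dimensional projection to ℝ^t is well defined on equivalence classes. -/
open scoped BigOperators

lemma sum_scale (s k : ℕ) (hk : 0 < k) (f : ℕ → ℝ) :
    ∑ j : Fin (s * k), f (j.1 / k) = k * ∑ j : Fin s, f j.1 := by
  rw [← Fintype.sum_equiv (finProdFinEquiv) (fun p : Fin s × Fin k => f p.1.1)
      (fun j : Fin (s * k) => f (j.1 / k)) ?_]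
  · rw [Fintype.sum_prod_type]
    simp [Finset.sum_const, mul_comm, Finset.mul_sum]
  · intro p
    have : ((finProdFinEquiv p : Fin (s * k)) : ℕ) = p.2.1 + k * p.1.1 := rfl
    rw [this, Nat.add_mul_div_left _ _ hk, Nat.div_eq_of_lt p.2.2, Nat.zero_add]

lemma rep_mul {m : ℕ} (N s : ℕ) (hmN : m ∣ N) (hNs : N ∣ s) (hm : 0 < m) (hN : 0 < N)
    (x : Fin m → ℝ) (j : Fin s) (h : j.1 / (s / N) < N) :
    rep s x j = rep N x ⟨j.1 / (s / N), h⟩ := by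
  have h1 : s / N * (N / m) = s / m := by
    obtain ⟨a, rfl⟩ := hNs
    obtain ⟨b, rfl⟩ := hmN
    rw [Nat.mul_div_cancel_left _ hN, Nat.mul_div_cancel_left _ hm, mul_assoc,
      Nat.mul_div_cancel_left _ hm, Nat.mul_comm]
  show _ = dite _ _ _
  simp only [rep, Nat.div_div_eq_div_mul, h1]

lemma pimat_apply (m t : ℕ) (hm : 0 < m) (ht : 0 < t) (x : Fin m → ℝ) (i : Fin t) :
    (PiMat m t).mulVec x i
      = (t : ℝ) / (Nat.lcm t m) * ∑ j : Fin (Nat.lcm t m),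
          (if j.1 / (Nat.lcm t m / t) = i.1 then rep (Nat.lcm t m) x j else 0) := by
  simp only [PiMat, Matrix.mulVec, dotProduct, Matrix.smul_apply, Matrix.mul_apply,
    Matrix.transpose_apply, onesRepMat, Matrix.of_apply, smul_eq_mul, Pi.smul_apply]
  have hL : 0 < Nat.lcm t m := Nat.pos_of_ne_zero (Nat.lcm_ne_zero ht.ne' hm.ne')
  have hmL : m ∣ Nat.lcm t m := Nat.dvd_lcm_right _ _
  have hjm : ∀ j : Fin (Nat.lcm t m), j.1 / (Nat.lcm t m / m) < m := by
    intro j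
    have hq : 0 < Nat.lcm t m / m := Nat.div_pos (Nat.le_of_dvd hL hmL) hm
    rw [Nat.div_lt_iff_lt_mul hq]
    calc j.1 < Nat.lcm t m := j.2
      _ = m * (Nat.lcm t m / m) := (Nat.mul_div_cancel' hmL).symm
  simp only [Finset.sum_mul, Finset.mul_sum, mul_assoc]
  rw [Finset.sum_comm]
  refine Finset.sum_congr rfl fun j _ => ?_
  by_cases hc1 : j.1 / (Nat.lcm t m / t) = i.1
  · simp only [hc1, if_true, one_mul]
    have inner : ∑ k : Fin m, (if (⟨j.1 / (Nat.lcm t m / m), hjm j⟩ : Fin m) = k then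
        (t:ℝ) / ↑(Nat.lcm t m) * x k else 0)
        = (t:ℝ) / ↑(Nat.lcm t m) * rep (Nat.lcm t m) x j := by
      rw [Finset.sum_ite_eq]
      simp [rep, hjm j]
    rw [← inner]
    refine Finset.sum_congr rfl fun k _ => ?_
    by_cases hc : j.1 / (Nat.lcm t m / m) = k.1 <;>
      simp [hc, Fin.ext_iff, mul_comm, mul_left_comm]
  · simp [hc1]

lemma proj_scale (m t L k : ℕ) (hm : 0 < m) (ht : 0 < t) (hk : 0 < k)
    (htL : t ∣ L) (hmL : m ∣ L) (hL : 0 < L) (x : Fin m → ℝ) (i : Fin t) :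
    (t : ℝ) / L * ∑ j : Fin L, (if j.1 / (L / t) = i.1 then rep L x j else 0)
      = (t : ℝ) / (L * k) * ∑ j : Fin (L * k),
          (if j.1 / (L * k / t) = i.1 then rep (L * k) x j else 0) := by
  have h1 : L * k / t = k * (L / t) := by rw [mul_comm L k, Nat.mul_div_assoc k htL]
  have h2 : L * k / m = k * (L / m) := by rw [mul_comm L k, Nat.mul_div_assoc k hmL]
  have key := sum_scale L k hk (fun a => if a / (L / t) = i.1 then
    (if h : a / (L / m) < m then x ⟨a / (L / m), h⟩ else 0) else 0)
  have rhs_eq : ∑ j : Fin (L * k), (if j.1 / (L * k / t) = i.1 then rep (L * k) x j else 0)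
      = ∑ j : Fin (L * k), (fun a => if a / (L / t) = i.1 then
          (if h : a / (L / m) < m then x ⟨a / (L / m), h⟩ else 0) else 0) (j.1 / k) := by
    refine Finset.sum_congr rfl fun j _ => ?_
    simp only [rep, h1, h2, Nat.div_div_eq_div_mul]
  have lhs_eq : ∑ j : Fin L, (if j.1 / (L / t) = i.1 then rep L x j else 0)
      = ∑ j : Fin L, (fun a => if a / (L / t) = i.1 then
          (if h : a / (L / m) < m then x ⟨a / (L / m), h⟩ else 0) else 0) j.1 := rfl
  rw [rhs_eq, key, lhs_eq]
  have hL0 : (L : ℝ) ≠ 0 := Nat.cast_ne_zero.mpr hL.ne'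
  have hk0 : (k : ℝ) ≠ 0 := Nat.cast_ne_zero.mpr hk.ne'
  push_cast
  field_simp

/-- If `x ↔ y` then the projections onto `ℝ^t` agree: `Π^m_t x = Π^n_t y`. -/
theorem stmt18 (m n : ℕ) (hm : 0 < m) (hn : 0 < n) (x : Fin m → ℝ) (y : Fin n → ℝ)
    (hxy : ∃ p q : ℕ, 0 < p ∧ 0 < q ∧ ∃ h : m * p = n * q,
      rep (m * p) x = rep (n * q) y ∘ Fin.cast h)
    (t : ℕ) (ht : 0 < t) :
    (PiMat m t).mulVec x = (PiMat n t).mulVec y := by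
  obtain ⟨p, q, hp, hq, hpq, hrep⟩ := hxy
  funext i
  have hNpos : 0 < m * p := Nat.mul_pos hm hp
  have hN'pos : 0 < n * q := hpq ▸ hNpos
  have hspos : 0 < Nat.lcm t (m * p) :=
    Nat.pos_of_ne_zero (Nat.lcm_ne_zero ht.ne' hNpos.ne')
  have hts : t ∣ Nat.lcm t (m * p) := Nat.dvd_lcm_left _ _
  have hNs : m * p ∣ Nat.lcm t (m * p) := Nat.dvd_lcm_right _ _
  have hN's : n * q ∣ Nat.lcm t (m * p) := hpq ▸ hNs
  have hms : m ∣ Nat.lcm t (m * p) := (Dvd.intro p rfl).trans hNs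
  have hns : n ∣ Nat.lcm t (m * p) := (Dvd.intro q rfl).trans hN's
  -- key: rep over the big common multiple agrees
  have hrepeq : ∀ j : Fin (Nat.lcm t (m * p)), rep (Nat.lcm t (m * p)) x j
      = rep (Nat.lcm t (m * p)) y j := by
    intro j
    have hq1 : 0 < Nat.lcm t (m * p) / (m * p) :=
      Nat.div_pos (Nat.le_of_dvd hspos hNs) hNpos
    have hlt : j.1 / (Nat.lcm t (m * p) / (m * p)) < m * p := by
      rw [Nat.div_lt_iff_lt_mul hq1]
      calc j.1 < Nat.lcm t (m * p) := j.2
        _ = m * p * (Nat.lcm t (m * p) / (m * p)) := (Nat.mul_div_cancel' hNs).symm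
    have hsame : Nat.lcm t (m * p) / (m * p) = Nat.lcm t (m * p) / (n * q) := by
      rw [hpq]
    have hlt' : j.1 / (Nat.lcm t (m * p) / (n * q)) < n * q := by
      rw [← hsame]; exact hpq ▸ hlt
    rw [rep_mul (m * p) _ (Dvd.intro p rfl) hNs hm hNpos x j hlt,
      rep_mul (n * q) _ (Dvd.intro q rfl) hN's hn hN'pos y j hlt']
    have := congrFun hrep ⟨j.1 / (Nat.lcm t (m * p) / (m * p)), hlt⟩
    rw [this]
    simp only [Function.comp_apply]
    congr 1
    apply Fin.ext
    simp [hsame]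
  rw [pimat_apply m t hm ht x i, pimat_apply n t hn ht y i]
  -- scale both sides up to the common multiple
  have hL1 : Nat.lcm t m ∣ Nat.lcm t (m * p) := Nat.lcm_dvd hts hms
  have hL2 : Nat.lcm t n ∣ Nat.lcm t (m * p) := Nat.lcm_dvd hts hns
  have hL1pos : 0 < Nat.lcm t m := Nat.pos_of_ne_zero (Nat.lcm_ne_zero ht.ne' hm.ne')
  have hL2pos : 0 < Nat.lcm t n := Nat.pos_of_ne_zero (Nat.lcm_ne_zero ht.ne' hn.ne')
  have hk1 : Nat.lcm t (m * p) = Nat.lcm t m * (Nat.lcm t (m * p) / Nat.lcm t m) :=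
    (Nat.mul_div_cancel' hL1).symm
  have hk2 : Nat.lcm t (m * p) = Nat.lcm t n * (Nat.lcm t (m * p) / Nat.lcm t n) :=
    (Nat.mul_div_cancel' hL2).symm
  have hk1pos : 0 < Nat.lcm t (m * p) / Nat.lcm t m :=
    Nat.div_pos (Nat.le_of_dvd hspos hL1) hL1pos
  have hk2pos : 0 < Nat.lcm t (m * p) / Nat.lcm t n :=
    Nat.div_pos (Nat.le_of_dvd hspos hL2) hL2pos
  rw [proj_scale m t (Nat.lcm t m) _ hm ht hk1pos (Nat.dvd_lcm_left _ _)
      (Nat.dvd_lcm_right _ _) hL1pos x i,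
    proj_scale n t (Nat.lcm t n) _ hn ht hk2pos (Nat.dvd_lcm_left _ _)
      (Nat.dvd_lcm_right _ _) hL2pos y i, ← Nat.cast_mul, ← Nat.cast_mul, ← hk1, ← hk2]
  congr 1
  refine Finset.sum_congr rfl fun j _ => ?_
  rw [hrepeq j]
end

section
/- For A ∈ M_{m×n}, the cross-dimensional operator norm ‖A‖_V := sup_{0≠x∈ℝ^∞} ‖A ⋉̄ x‖_V / ‖x‖_V equals sqrt((n/m)·σ_max(AᵀA)), where σ_max denotes the largest eigenvalue of AᵀA. In particular, when restricted to x ∈ ℝ^n, sup_{0≠x∈ℝ^n} ‖Ax‖_V/‖x‖_V = sqrt((n/m)·σ_max(AᵀA)). -/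
open scoped BigOperators
open Matrix

/-- `A ⋉̄ x` for a vector `x ∈ ℝ^p`. -/
noncomputable def dkstpVec {m n p : ℕ} (A : Matrix (Fin m) (Fin n) ℝ) (x : Fin p → ℝ) :
    Fin m → ℝ :=
  ((n : ℝ) / (Nat.lcm n p : ℝ)) • (repCols (Nat.lcm n p) A).mulVec (rep (Nat.lcm n p) x)

/-!
With `t = lcm(n, p)`, the product factors as `A ⋉̄ x = A (Ψ_{n×p} x)`. The vector `Ψ_{n×p} x` is
`n/t` times the block sums (blocks of length `t/n`) of `x ⊗ 1_{t/p}`, so Cauchy–Schwarz on each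
block gives `‖Ψ_{n×p} x‖_V ≤ ‖x‖_V`, while `Ψ_{n×n} = I`. Both suprema therefore reduce to
`‖A y‖_V / ‖y‖_V` for `y ∈ ℝ^n`, and `m ‖A y‖_V² = yᵀ AᵀA y ≤ σ_max yᵀy = n ‖y‖_V² σ_max`
with equality at an eigenvector for `σ_max`.
-/

lemma dotProduct_self_nonneg {ι : Type*} [Fintype ι] (x : ι → ℝ) : 0 ≤ x ⬝ᵥ x :=
  Finset.sum_nonneg fun i _ => mul_self_nonneg (x i)

lemma dotProduct_mulVec_le_of_eigen_le {ι : Type*} [Fintype ι] [DecidableEq ι]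
    {M : Matrix ι ι ℝ} (hM : M.IsHermitian) {σ : ℝ}
    (h : ∀ μ (v : ι → ℝ), v ≠ 0 → M *ᵥ v = μ • v → μ ≤ σ) (x : ι → ℝ) :
    x ⬝ᵥ M *ᵥ x ≤ σ * (x ⬝ᵥ x) := by
  have heig (i : ι) : hM.eigenvalues i ≤ σ :=
    h _ _ (by simpa using hM.eigenvectorBasis.orthonormal.ne_zero i) (hM.mulVec_eigenvectorBasis i)
  have hN : (algebraMap ℝ (Matrix ι ι ℝ) σ - M).IsHermitian :=
    (IsSelfAdjoint.algebraMap _ (IsSelfAdjoint.all σ)).sub hM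
  -- the spectrum of `σ - M` is `σ - spectrum M ⊆ [0, ∞)`
  have hpsd : (algebraMap ℝ (Matrix ι ι ℝ) σ - M).PosSemidef := by
    rw [hN.posSemidef_iff_eigenvalues_nonneg]
    intro j
    have hj := hN.eigenvalues_mem_spectrum_real j
    rw [← spectrum.singleton_sub_eq, hM.spectrum_real_eq_range_eigenvalues] at hj
    obtain ⟨_, rfl, _, ⟨i, rfl⟩, hj⟩ := hj
    simpa [← hj] using heig i
  simpa only [star_trivial, sub_mulVec, dotProduct_sub, Algebra.algebraMap_eq_smul_one,
    smul_mulVec, one_mulVec, dotProduct_smul, smul_eq_mul, sub_nonneg] using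
    hpsd.dotProduct_mulVec_nonneg x

lemma vnorm_eq_sqrt_dotProduct {k : ℕ} (x : Fin k → ℝ) : vnorm x = √(x ⬝ᵥ x / k) := by
  simp only [vnorm, dotProduct, sq, one_div, inv_mul_eq_div]

lemma vnorm_pos {k : ℕ} {x : Fin k → ℝ} (hx : x ≠ 0) : 0 < vnorm x := by
  obtain ⟨i, -⟩ := Function.ne_iff.1 hx
  have hk : (0 : ℝ) < k := Nat.cast_pos.2 i.pos
  have hxx : 0 < x ⬝ᵥ x :=
    (dotProduct_self_nonneg x).lt_of_ne (Ne.symm (mt dotProduct_self_eq_zero.1 hx))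
  rw [vnorm_eq_sqrt_dotProduct]
  positivity

lemma vnorm_mulVec {m n : ℕ} (A : Matrix (Fin m) (Fin n) ℝ) (x : Fin n → ℝ) :
    vnorm (A *ᵥ x) = √(x ⬝ᵥ (Aᵀ * A) *ᵥ x / m) := by
  rw [vnorm_eq_sqrt_dotProduct, ← mulVec_mulVec, dotProduct_mulVec x, vecMul_transpose]

lemma sqrt_mul_vnorm {n : ℕ} (hn : 0 < n) (m : ℕ) (c : ℝ) (x : Fin n → ℝ) :
    √(n / m * c) * vnorm x = √(c * (x ⬝ᵥ x) / m) := by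
  have hn' : (n : ℝ) ≠ 0 := by positivity
  rw [vnorm_eq_sqrt_dotProduct,
    ← Real.sqrt_mul' _ (div_nonneg (dotProduct_self_nonneg x) (Nat.cast_nonneg n))]
  congr 1
  field_simp

lemma vnorm_mulVec_le {m n : ℕ} (hn : 0 < n) (A : Matrix (Fin m) (Fin n) ℝ) {σ : ℝ}
    {x : Fin n → ℝ} (hx : x ⬝ᵥ (Aᵀ * A) *ᵥ x ≤ σ * (x ⬝ᵥ x)) :
    vnorm (A *ᵥ x) ≤ √(n / m * σ) * vnorm x := by
  rw [vnorm_mulVec, sqrt_mul_vnorm hn]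
  gcongr

lemma vnorm_mulVec_of_eigenvector {m n : ℕ} (hn : 0 < n) (A : Matrix (Fin m) (Fin n) ℝ)
    {σ : ℝ} {v : Fin n → ℝ} (hv : (Aᵀ * A) *ᵥ v = σ • v) :
    vnorm (A *ᵥ v) = √(n / m * σ) * vnorm v := by
  rw [vnorm_mulVec, sqrt_mul_vnorm hn, hv, dotProduct_smul, smul_eq_mul]

lemma val_finProdFinEquiv_div {n d : ℕ} (a : Fin n) (b : Fin d) :
    (finProdFinEquiv (a, b) : ℕ) / d = a := by
  rw [finProdFinEquiv_apply_val, Nat.add_mul_div_left _ _ b.pos, Nat.div_eq_of_lt b.2, zero_add]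

lemma onesRepMat_finProdFinEquiv {p e : ℕ} (a a' : Fin p) (c : Fin e) :
    onesRepMat p (p * e) a (finProdFinEquiv (a', c)) = if a' = a then 1 else 0 := by
  simp only [onesRepMat, of_apply, Nat.mul_div_cancel_left _ a.pos, val_finProdFinEquiv_div,
    Fin.val_inj]

lemma onesRepMat_mulVec_apply {n d : ℕ} (u : Fin (n * d) → ℝ) (a : Fin n) :
    (onesRepMat n (n * d) *ᵥ u) a = ∑ c, u (finProdFinEquiv (a, c)) := by
  rw [mulVec, dotProduct, ← finProdFinEquiv.sum_comp, Fintype.sum_prod_type]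
  simp [onesRepMat_finProdFinEquiv]

lemma onesRepMat_mul_transpose {p t : ℕ} (h : p ∣ t) :
    onesRepMat p t * (onesRepMat p t)ᵀ = ((t / p : ℕ) : ℝ) • 1 := by
  obtain ⟨e, rfl⟩ := h
  ext a b
  rw [mul_apply, ← finProdFinEquiv.sum_comp, Fintype.sum_prod_type]
  simp [onesRepMat_finProdFinEquiv, Nat.mul_div_cancel_left _ a.pos, one_apply, @eq_comm _ b a]

lemma onesRepMat_mulVec_dotProduct_self_le {n t : ℕ} (h : n ∣ t) (u : Fin t → ℝ) :
    (onesRepMat n t *ᵥ u) ⬝ᵥ (onesRepMat n t *ᵥ u) ≤ ((t / n : ℕ) : ℝ) * (u ⬝ᵥ u) := by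
  obtain ⟨d, rfl⟩ := h
  simp only [dotProduct, ← sq]
  rw [← finProdFinEquiv.sum_comp, Fintype.sum_prod_type, Finset.mul_sum]
  refine Finset.sum_le_sum fun a _ => ?_
  rw [onesRepMat_mulVec_apply, Nat.mul_div_cancel_left _ a.pos]
  simpa using sq_sum_le_card_mul_sum_sq (s := Finset.univ)
    (f := fun c => u (finProdFinEquiv (a, c)))

lemma repCols_eq_mul_onesRepMat {m n : ℕ} (t : ℕ) (A : Matrix (Fin m) (Fin n) ℝ) :
    repCols t A = A * onesRepMat n t := by
  ext i j
  simp only [repCols, onesRepMat, mul_apply, of_apply, mul_ite, mul_one, mul_zero]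
  split_ifs with h
  · rw [Fintype.sum_eq_single ⟨_, h⟩ fun a ha => if_neg fun e => ha (Fin.ext e.symm), if_pos rfl]
  · exact (Finset.sum_eq_zero fun a _ => if_neg (a.2.trans_le (not_lt.1 h)).ne').symm

lemma rep_eq_transpose_mulVec {p : ℕ} (t : ℕ) (x : Fin p → ℝ) :
    rep t x = (onesRepMat p t)ᵀ *ᵥ x := by
  ext j
  simp only [rep, onesRepMat, mulVec, dotProduct, transpose_apply, of_apply, ite_mul, one_mul,
    zero_mul]
  split_ifs with h
  · rw [Fintype.sum_eq_single ⟨_, h⟩ fun a ha => if_neg fun e => ha (Fin.ext e.symm), if_pos rfl]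
  · exact (Finset.sum_eq_zero fun a _ => if_neg (a.2.trans_le (not_lt.1 h)).ne').symm

lemma rep_dotProduct_self {p t : ℕ} (h : p ∣ t) (x : Fin p → ℝ) :
    rep t x ⬝ᵥ rep t x = ((t / p : ℕ) : ℝ) * (x ⬝ᵥ x) := by
  rw [rep_eq_transpose_mulVec, dotProduct_mulVec, vecMul_transpose, mulVec_mulVec,
    onesRepMat_mul_transpose h, smul_mulVec, one_mulVec, smul_dotProduct, smul_eq_mul]

lemma dkstpVec_eq_mulVec_Psi {m n p : ℕ} (A : Matrix (Fin m) (Fin n) ℝ) (x : Fin p → ℝ) :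
    dkstpVec A x = A *ᵥ (Psi n p *ᵥ x) := by
  rw [dkstpVec, Psi, repCols_eq_mul_onesRepMat, rep_eq_transpose_mulVec, smul_mulVec,
    mulVec_smul, mulVec_mulVec, mulVec_mulVec, Matrix.mul_assoc]

lemma Psi_self (n : ℕ) : Psi n n = 1 := by
  ext a b
  have hn : (n : ℝ) ≠ 0 := Nat.cast_ne_zero.2 a.pos.ne'
  rw [Psi, onesRepMat_mul_transpose (Nat.dvd_lcm_left n n), Nat.lcm_self, Nat.div_self a.pos]
  simp [hn]

lemma dkstpVec_self {m n : ℕ} (A : Matrix (Fin m) (Fin n) ℝ) (x : Fin n → ℝ) :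
    dkstpVec A x = A *ᵥ x := by
  rw [dkstpVec_eq_mulVec_Psi, Psi_self, one_mulVec]

lemma vnorm_Psi_mulVec_le {n p : ℕ} (hn : 0 < n) (hp : 0 < p) (x : Fin p → ℝ) :
    vnorm (Psi n p *ᵥ x) ≤ vnorm x := by
  set t := Nat.lcm n p
  have ht : (t : ℝ) ≠ 0 := by positivity
  have hn' : (n : ℝ) ≠ 0 := by positivity
  have hp' : (p : ℝ) ≠ 0 := by positivity
  have hPsi : Psi n p *ᵥ x = ((n : ℝ) / t) • (onesRepMat n t *ᵥ rep t x) := by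
    rw [Psi, rep_eq_transpose_mulVec, smul_mulVec, mulVec_mulVec]
  have hblock : (onesRepMat n t *ᵥ rep t x) ⬝ᵥ (onesRepMat n t *ᵥ rep t x)
      ≤ (t / n : ℝ) * ((t / p : ℝ) * (x ⬝ᵥ x)) := by
    have := onesRepMat_mulVec_dotProduct_self_le (Nat.dvd_lcm_left n p) (rep t x)
    rwa [rep_dotProduct_self (Nat.dvd_lcm_right n p), Nat.cast_div (Nat.dvd_lcm_left n p) hn',
      Nat.cast_div (Nat.dvd_lcm_right n p) hp'] at this
  rw [vnorm_eq_sqrt_dotProduct, vnorm_eq_sqrt_dotProduct, hPsi, smul_dotProduct, dotProduct_smul,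
    smul_eq_mul, smul_eq_mul]
  refine Real.sqrt_le_sqrt ?_
  calc n / t * (n / t * _) / n
      ≤ n / t * (n / t * ((t / n : ℝ) * ((t / p : ℝ) * (x ⬝ᵥ x)))) / n := by gcongr
    _ = x ⬝ᵥ x / p := by field_simp

theorem stmt19_general (m n : ℕ) (hn : 0 < n) (A : Matrix (Fin m) (Fin n) ℝ)
    (σmax : ℝ)
    (hσ : IsGreatest {μ : ℝ | ∃ v : Fin n → ℝ, v ≠ 0 ∧ (Aᵀ * A).mulVec v = μ • v} σmax) :
    IsLUB {r : ℝ | ∃ p : ℕ, 0 < p ∧ ∃ x : Fin p → ℝ, x ≠ 0 ∧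
        r = vnorm (dkstpVec A x) / vnorm x}
      (Real.sqrt ((n / m : ℝ) * σmax)) ∧
    IsLUB {r : ℝ | ∃ x : Fin n → ℝ, x ≠ 0 ∧ r = vnorm (A.mulVec x) / vnorm x}
      (Real.sqrt ((n / m : ℝ) * σmax)) := by
  obtain ⟨⟨v, hv0, hv⟩, hσmax⟩ := hσ
  have hAtA : (Aᵀ * A).IsHermitian := by simpa using isHermitian_conjTranspose_mul_self A
  have hbound (x : Fin n → ℝ) : vnorm (A *ᵥ x) ≤ √(n / m * σmax) * vnorm x :=
    vnorm_mulVec_le hn A <|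
      dotProduct_mulVec_le_of_eigen_le hAtA (fun μ w hw hμ => hσmax ⟨w, hw, hμ⟩) x
  have hattained : vnorm (A *ᵥ v) / vnorm v = √(n / m * σmax) := by
    rw [vnorm_mulVec_of_eigenvector hn A hv, mul_div_cancel_right₀ _ (vnorm_pos hv0).ne']
  refine ⟨IsGreatest.isLUB ⟨⟨n, hn, v, hv0, by rw [dkstpVec_self, hattained]⟩, ?_⟩,
    IsGreatest.isLUB ⟨⟨v, hv0, hattained.symm⟩, ?_⟩⟩
  · rintro _ ⟨p, hp, x, hx, rfl⟩
    rw [div_le_iff₀ (vnorm_pos hx), dkstpVec_eq_mulVec_Psi]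
    exact (hbound _).trans (by gcongr; exact vnorm_Psi_mulVec_le hn hp x)
  · rintro _ ⟨x, hx, rfl⟩
    rw [div_le_iff₀ (vnorm_pos hx)]
    exact hbound x

/-- The cross-dimensional operator norm of `A ∈ M_{m×n}` equals
`sqrt((n/m) σ_max(AᵀA))`, both as a sup over all of `ℝ^∞` and over `ℝ^n`. -/
theorem stmt19 (m n : ℕ) (hm : 0 < m) (hn : 0 < n) (A : Matrix (Fin m) (Fin n) ℝ)
    (σmax : ℝ)
    (hσ : IsGreatest {μ : ℝ | ∃ v : Fin n → ℝ, v ≠ 0 ∧ (Aᵀ * A).mulVec v = μ • v} σmax) :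
    IsLUB {r : ℝ | ∃ p : ℕ, 0 < p ∧ ∃ x : Fin p → ℝ, x ≠ 0 ∧
        r = vnorm (dkstpVec A x) / vnorm x}
      (Real.sqrt ((n / m : ℝ) * σmax)) ∧
    IsLUB {r : ℝ | ∃ x : Fin n → ℝ, x ≠ 0 ∧ r = vnorm (A.mulVec x) / vnorm x}
      (Real.sqrt ((n / m : ℝ) * σmax)) :=
  stmt19_general m n hn A σmax hσ
end
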